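/- arXiv:2211.07033 — 3 statements merged into one kernel-verified Lean document; each statement's English description precedes it below -/
import Mathlib

section
/- Let H⃗ be an acyclic oriented graph on h vertices with at least one arc, and let R = R⃗(H⃗) be its orientation Ramsey number. For every n ≥ R and every set F ⊆ E(K_n): if there exists an orientation F⃗ of F containing at most (2·C(R,h))^{-1}·C(n,h) copies of H⃗, then |E(K_n) \ F| ≥ n²/(2R²). -/
/-- `o` is an orientation of the simple graph `G`: every edge of `G` is assigned
exactly one direction, and there are no other arcs. -/
def IsOrientation {α : Type*} (G : SimpleGraph α) (o : α → α → Prop) : Prop :=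
  (∀ u v, o u v → G.Adj u v) ∧ ∀ u v, G.Adj u v → (o u v ↔ ¬ o v u)

/-- The digraph `o` contains a (not necessarily induced) copy of the oriented graph `H`
as a subdigraph. -/
def HasCopy {α β : Type*} (o : α → α → Prop) (H : β → β → Prop) : Prop :=
  ∃ f : β → α, Function.Injective f ∧ ∀ a b, H a b → o (f a) (f b)

/-- `G → H⃗`: every orientation of `G` contains a copy of `H`. -/
def Arrows {α β : Type*} (G : SimpleGraph α) (H : β → β → Prop) : Prop :=
  ∀ o : α → α → Prop, IsOrientation G o → HasCopy o H
/-- A digraph is acyclic if it has no directed cycles, i.e. the transitive closure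
of its arc relation is irreflexive. -/
def RelAcyclic {β : Type*} (H : β → β → Prop) : Prop :=
  Irreflexive (Relation.TransGen H)

/-- The orientation Ramsey number `R⃗(H⃗) = inf{n : K_n → H⃗}`. -/
noncomputable def orientationRamsey {β : Type*} (H : β → β → Prop) : ℕ :=
  sInf {n : ℕ | Arrows (SimpleGraph.completeGraph (Fin n)) H}

/-- `o` is an orientation of the set `F` of edges of `K_n`. -/
def IsOrientationOfEdges (n : ℕ) (F : Set (Sym2 (Fin n))) (o : Fin n → Fin n → Prop) : Prop :=
  (∀ u v, o u v → s(u, v) ∈ F) ∧ ∀ u v, s(u, v) ∈ F → (o u v ↔ ¬ o v u)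

/-- The number of copies of the oriented graph `H` contained in the digraph `o` on `[n]`:
a copy is recorded by its vertex set together with its arc set. -/
noncomputable def copyCount {β : Type*} (H : β → β → Prop) (n : ℕ)
    (o : Fin n → Fin n → Prop) : ℕ :=
  {q : Set (Fin n) × Set (Fin n × Fin n) |
    ∃ f : β → Fin n, Function.Injective f ∧ (∀ a b, H a b → o (f a) (f b)) ∧
      q.1 = Set.range f ∧ q.2 = {p | ∃ a b, H a b ∧ p = (f a, f b)}}.ncard

/-!
Call an `R`-set of vertices good if all its pairs lie in `F`. Since `K_R → H⃗`, every good set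
contains a copy of `H⃗`, and the vertex set of a copy lies in `C(n-h, R-h)` of the `R`-sets; as
`C(n,R) C(R,h) = C(n,h) C(n-h,R-h)`, the bound on the number of copies leaves at most half of the
`R`-sets good. Every other `R`-set contains a missing edge, which lies in `C(n-2, R-2)` of the
`R`-sets, so with `m = |E(K_n) \ F|` we get `C(n,R) ≤ 2m C(n-2,R-2)`, that is
`m ≥ n(n-1)/(2R(R-1)) ≥ n²/(2R²)`.
-/

open Finset

section Supersets

variable {α : Type*} [Fintype α] [DecidableEq α]

lemma card_filter_powersetCard_superset_le (T : Finset α) (r : ℕ) :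
    #{S ∈ powersetCard r univ | T ⊆ S} ≤ (Fintype.card α - #T).choose (r - #T) := by
  calc #{S ∈ powersetCard r univ | T ⊆ S}
      ≤ #(powersetCard (r - #T) (univ \ T)) := card_le_card_of_injOn (· \ T) ?_ ?_
    _ = (Fintype.card α - #T).choose (r - #T) := by rw [card_powersetCard, card_univ_sdiff]
  · intro S hS
    simp only [coe_filter, mem_powersetCard, subset_univ, true_and, Set.mem_ofPred_eq] at hS
    simp [card_sdiff_of_subset hS.2, hS.1, sdiff_subset_sdiff]
  · intro S hS S' hS' hSS'
    simp only [coe_filter, mem_powersetCard, subset_univ, true_and, Set.mem_ofPred_eq] at hS hS'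
    rw [← sdiff_union_of_subset hS.2, ← sdiff_union_of_subset hS'.2]
    exact congrArg (· ∪ T) hSS'

lemma card_le_card_mul_choose_of_forall_exists_subset {𝒜 ℬ : Finset (Finset α)} {r t : ℕ}
    (h𝒜 : ∀ S ∈ 𝒜, #S = r) (hℬ : ∀ T ∈ ℬ, #T = t) (hcover : ∀ S ∈ 𝒜, ∃ T ∈ ℬ, T ⊆ S) :
    #𝒜 ≤ #ℬ * (Fintype.card α - t).choose (r - t) := by
  calc #𝒜 ≤ #(ℬ.biUnion fun T => {S ∈ powersetCard r univ | T ⊆ S}) := by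
        refine card_le_card fun S hS => ?_
        obtain ⟨T, hT, hTS⟩ := hcover S hS
        simp only [mem_biUnion, mem_filter, mem_powersetCard, subset_univ, true_and]
        exact ⟨T, hT, h𝒜 S hS, hTS⟩
    _ ≤ #ℬ * (Fintype.card α - t).choose (r - t) :=
        card_biUnion_le_card_mul _ _ _ fun T hT =>
          hℬ T hT ▸ card_filter_powersetCard_superset_le T r

end Supersets

namespace SimpleGraph

lemma edgeSet_compl_fromEdgeSet {V : Type*} (F : Set (Sym2 V)) :
    (fromEdgeSet F)ᶜ.edgeSet = (⊤ : SimpleGraph V).edgeSet \ F := by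
  ext e
  induction e using Sym2.ind
  simp only [mem_edgeSet, compl_adj, fromEdgeSet_adj, top_adj, Set.mem_sdiff]
  tauto

variable {α : Type*} [Fintype α] [DecidableEq α] (G : SimpleGraph α) [DecidableRel G.Adj]

lemma cliqueFinset_subset_powersetCard (r : ℕ) : G.cliqueFinset r ⊆ powersetCard r univ :=
  fun _ hS => mem_powersetCard_univ.2 (mem_cliqueFinset_iff.1 hS).card_eq

lemma card_powersetCard_sdiff_cliqueFinset_le (r : ℕ) :
    #(powersetCard r univ \ G.cliqueFinset r)
      ≤ #Gᶜ.edgeFinset * (Fintype.card α - 2).choose (r - 2) := by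
  calc _ ≤ #(Gᶜ.edgeFinset.image Sym2.toFinset) * (Fintype.card α - 2).choose (r - 2) := by
        refine card_le_card_mul_choose_of_forall_exists_subset ?_ ?_ ?_
        · intro S hS
          exact mem_powersetCard_univ.1 (mem_sdiff.1 hS).1
        · simp only [mem_image, mem_edgeFinset, forall_exists_index, and_imp]
          rintro _ e he rfl
          exact Sym2.card_toFinset_of_not_isDiag e (Gᶜ.not_isDiag_of_mem_edgeSet he)
        · intro S hS
          obtain ⟨hSr, hS⟩ := mem_sdiff.1 hS
          obtain ⟨u, hu, v, hv, huv, hadj⟩ : ∃ u ∈ S, ∃ v ∈ S, u ≠ v ∧ ¬G.Adj u v := by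
            simpa [mem_cliqueFinset_iff, isNClique_iff, mem_powersetCard_univ.1 hSr, IsClique,
              Set.Pairwise] using hS
          refine ⟨s(u, v).toFinset, mem_image_of_mem _ ?_, ?_⟩
          · simpa [compl_adj] using ⟨huv, hadj⟩
          · simp [Sym2.toFinset_mk_eq, insert_subset_iff, hu, hv]
    _ ≤ _ := Nat.mul_le_mul_right _ card_image_le

lemma choose_le_card_edgeFinset_compl_mul_add_card_cliqueFinset (r : ℕ) :
    (Fintype.card α).choose r
      ≤ #Gᶜ.edgeFinset * (Fintype.card α - 2).choose (r - 2) + #(G.cliqueFinset r) := by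
  rw [← card_univ, ← card_powersetCard, ← card_sdiff_add_card_eq_card
    (G.cliqueFinset_subset_powersetCard r), card_univ]
  gcongr
  exact G.card_powersetCard_sdiff_cliqueFinset_le r

lemma cliqueFinset_eq_powersetCard_of_le_one {r : ℕ} (hr : r ≤ 1) :
    G.cliqueFinset r = powersetCard r univ := by
  refine (G.cliqueFinset_subset_powersetCard r).antisymm fun S hS => ?_
  have hS := mem_powersetCard_univ.1 hS
  exact mem_cliqueFinset_iff.2
    ⟨fun x hx y hy hxy => absurd (card_le_one.1 (by omega) x hx y hy) hxy, hS⟩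

end SimpleGraph

section Orientations

open SimpleGraph

variable {α β γ : Type*} {G : SimpleGraph α} {G' : SimpleGraph γ} {o : α → α → Prop}
  {H : β → β → Prop}

lemma IsOrientationOfEdges.isOrientation_fromEdgeSet {n : ℕ} {F : Set (Sym2 (Fin n))}
    {o : Fin n → Fin n → Prop} (ho : IsOrientationOfEdges n F o) :
    IsOrientation (fromEdgeSet F) o := by
  refine ⟨fun u v huv => (fromEdgeSet_adj _).2 ⟨ho.1 u v huv, ?_⟩,
    fun u v huv => ho.2 u v ((fromEdgeSet_adj _).1 huv).1⟩
  rintro rfl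
  exact iff_not_self (ho.2 u u (ho.1 u u huv))

lemma IsOrientation.comap (ho : IsOrientation G o) (φ : G' →g G) :
    IsOrientation G' fun a b => G'.Adj a b ∧ o (φ a) (φ b) := by
  refine ⟨fun a b hab => hab.1, fun a b hab => ?_⟩
  have := ho.2 _ _ (φ.map_adj hab)
  simp only [hab, hab.symm, true_and, this]

lemma Arrows.exists_copy_of_injective_hom (hArr : Arrows G' H) (ho : IsOrientation G o)
    (φ : G' →g G) (hφ : Function.Injective φ) :
    ∃ f : β → α, Function.Injective f ∧ (∀ a b, H a b → o (f a) (f b)) ∧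
      Set.range f ⊆ Set.range φ := by
  obtain ⟨g, hg, harcs⟩ := hArr _ (ho.comap φ)
  exact ⟨φ ∘ g, hφ.comp hg, fun a b hab => (harcs a b hab).2, Set.range_comp_subset_range g φ⟩

lemma Arrows.exists_copy_of_isNClique {R : ℕ} (hArr : Arrows (completeGraph (Fin R)) H)
    (ho : IsOrientation G o) {S : Finset α} (hS : G.IsNClique R S) :
    ∃ f : β → α, Function.Injective f ∧ (∀ a b, H a b → o (f a) (f b)) ∧
      Set.range f ⊆ S := by
  let e : Fin R ≃ S := (S.equivFinOfCardEq hS.card_eq).symm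
  let φ : completeGraph (Fin R) →g G :=
    ⟨fun i => e i, fun hij => hS.isClique (e _).2 (e _).2
      (Subtype.val_injective.ne (e.injective.ne hij))⟩
  obtain ⟨f, hf, harcs, hrange⟩ :=
    hArr.exists_copy_of_injective_hom ho φ (Subtype.val_injective.comp e.injective)
  refine ⟨f, hf, harcs, hrange.trans ?_⟩
  rintro _ ⟨i, rfl⟩
  exact (e i).2

lemma Arrows.card_le [LinearOrder α] [Fintype α] [Fintype β]
    (hArr : Arrows (⊤ : SimpleGraph α) H) : Fintype.card β ≤ Fintype.card α := by
  have hlt : IsOrientation (⊤ : SimpleGraph α) (· < ·) :=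
    ⟨fun u v huv => huv.ne,
      fun u v huv => ⟨fun h => h.asymm, fun h => (lt_or_gt_of_ne huv).resolve_right h⟩⟩
  obtain ⟨f, hf, -⟩ := hArr _ hlt
  exact Fintype.card_le_of_injective f hf

end Orientations

section Counting

variable {β : Type*} {H : β → β → Prop} {n : ℕ} {o : Fin n → Fin n → Prop}

lemma card_le_copyCount {ℬ : Finset (Finset (Fin n))}
    (hℬ : ∀ T ∈ ℬ, ∃ f : β → Fin n, Function.Injective f ∧ (∀ a b, H a b → o (f a) (f b)) ∧
      (T : Set (Fin n)) = Set.range f) :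
    #ℬ ≤ copyCount H n o := by
  rw [copyCount, ← Set.ncard_coe_finset,
    ← Set.ncard_image_of_injective _ (coe_injective (α := Fin n))]
  refine (Set.ncard_le_ncard ?_ (Set.toFinite _)).trans (Set.ncard_image_le (f := Prod.fst))
  rintro _ ⟨T, hT, rfl⟩
  obtain ⟨f, hf, harcs, hTf⟩ := hℬ T hT
  exact ⟨(_, _), ⟨f, hf, harcs, hTf, rfl⟩, rfl⟩

lemma card_cliqueFinset_le_copyCount_mul [Fintype β] {R : ℕ}
    (hArr : Arrows (SimpleGraph.completeGraph (Fin R)) H) {G : SimpleGraph (Fin n)}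
    [DecidableRel G.Adj] (ho : IsOrientation G o) :
    #(G.cliqueFinset R) ≤ copyCount H n o * (n - Fintype.card β).choose (R - Fintype.card β) := by
  classical
  let ℬ : Finset (Finset (Fin n)) := {T | ∃ f : β → Fin n, Function.Injective f ∧
    (∀ a b, H a b → o (f a) (f b)) ∧ (T : Set (Fin n)) = Set.range f}
  calc #(G.cliqueFinset R)
      ≤ #ℬ * (Fintype.card (Fin n) - Fintype.card β).choose (R - Fintype.card β) := by
        refine card_le_card_mul_choose_of_forall_exists_subset
          (fun S hS => (SimpleGraph.mem_cliqueFinset_iff.1 hS).card_eq) ?_ ?_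
        · intro T hT
          obtain ⟨f, hf, -, hTf⟩ := (mem_filter.1 hT).2
          rw [← Set.ncard_coe_finset, hTf, Set.ncard_range_of_injective hf,
            Nat.card_eq_fintype_card]
        · intro S hS
          obtain ⟨f, hf, harcs, hfS⟩ :=
            hArr.exists_copy_of_isNClique ho (SimpleGraph.mem_cliqueFinset_iff.1 hS)
          refine ⟨univ.image f, mem_filter.2 ⟨mem_univ _, f, hf, harcs, by simp⟩, ?_⟩
          simpa [← coe_subset, Set.image_univ] using hfS
    _ ≤ _ := by
        rw [Fintype.card_fin]
        exact Nat.mul_le_mul_right _ (card_le_copyCount fun T hT => (mem_filter.1 hT).2)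

end Counting

lemma choose_sub_mul_le_half_choose {n R h : ℕ} {c : ℝ} (hhR : h ≤ R)
    (hc : c ≤ n.choose h / (2 * R.choose h)) :
    ((n - h).choose (R - h) : ℝ) * c ≤ n.choose R / 2 := by
  have hRh : (0 : ℝ) < R.choose h := by exact_mod_cast Nat.choose_pos hhR
  have hid : (n.choose R * R.choose h : ℝ) = n.choose h * (n - h).choose (R - h) := by
    exact_mod_cast Nat.choose_mul hhR
  calc ((n - h).choose (R - h) : ℝ) * c
      ≤ (n - h).choose (R - h) * (n.choose h / (2 * R.choose h)) := by gcongr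
    _ = n.choose R / 2 := by
        field_simp
        linarith

lemma sq_div_le_of_choose_le_mul_choose {n R m : ℕ} (hR : 2 ≤ R) (hRn : R ≤ n)
    (h : (n.choose R : ℝ) ≤ 2 * m * (n - 2).choose (R - 2)) :
    (n : ℝ) ^ 2 / (2 * R ^ 2) ≤ m := by
  have hC : (0 : ℝ) < (n - 2).choose (R - 2) := by exact_mod_cast Nat.choose_pos (by omega)
  have hid : (n.choose R * (R * (R - 1)) : ℝ) = n * (n - 1) * (n - 2).choose (R - 2) := by
    have := congrArg (Nat.cast (R := ℝ)) (Nat.choose_mul (n := n) hR)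
    push_cast [Nat.cast_choose_two] at this
    linarith
  have hRR : (0 : ℝ) < R * (R - 1) := by
    have hR' : (2 : ℝ) ≤ R := by exact_mod_cast hR
    nlinarith
  have hRn' : (R : ℝ) ≤ n := by exact_mod_cast hRn
  have hn : (n : ℝ) * (n - 1) ≤ 2 * m * (R * (R - 1)) := by
    refine le_of_mul_le_mul_right ?_ hC
    calc (n : ℝ) * (n - 1) * (n - 2).choose (R - 2) = n.choose R * (R * (R - 1)) := hid.symm
      _ ≤ 2 * m * (n - 2).choose (R - 2) * (R * (R - 1)) := by gcongr
      _ = 2 * m * (R * (R - 1)) * (n - 2).choose (R - 2) := by ring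
  rw [div_le_iff₀ (by positivity)]
  refine le_of_mul_le_mul_right ?_ hRR
  calc (n : ℝ) ^ 2 * ((R : ℝ) * (R - 1)) ≤ n * (n - 1) * R ^ 2 := by
        nlinarith [mul_nonneg (mul_nonneg n.cast_nonneg R.cast_nonneg) (sub_nonneg.2 hRn')]
    _ ≤ 2 * m * ((R : ℝ) * (R - 1)) * R ^ 2 := by gcongr
    _ = m * (2 * R ^ 2) * ((R : ℝ) * (R - 1)) := by ring

theorem stmt5_general {β : Type*} [Fintype β] (H : β → β → Prop)
    (h R : ℕ) (hh : h = Fintype.card β) (hR : R = orientationRamsey H)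
    (n : ℕ) (hn : R ≤ n)
    (F : Set (Sym2 (Fin n)))
    (o : Fin n → Fin n → Prop) (ho : IsOrientationOfEdges n F o)
    (hfew : (copyCount H n o : ℝ) ≤ (n.choose h : ℝ) / (2 * (R.choose h : ℝ))) :
    (n : ℝ) ^ 2 / (2 * (R : ℝ) ^ 2) ≤ (((SimpleGraph.completeGraph (Fin n)).edgeSet \ F).ncard : ℝ) := by
  classical
  obtain rfl | hRpos := R.eq_zero_or_pos
  · simp -- the left side is `n² / 0 = 0`
  have hArr : Arrows (SimpleGraph.completeGraph (Fin R)) H :=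
    hR ▸ Nat.sInf_mem (Nat.nonempty_of_pos_sInf (hR ▸ hRpos))
  have hhR : h ≤ R := by simpa [hh] using hArr.card_le
  set G := SimpleGraph.fromEdgeSet F
  have hcliques : (#(G.cliqueFinset R) : ℝ) ≤ n.choose R / 2 :=
    calc (#(G.cliqueFinset R) : ℝ) ≤ ((n - h).choose (R - h) * copyCount H n o : ℕ) := by
          rw [mul_comm, hh]
          exact_mod_cast card_cliqueFinset_le_copyCount_mul hArr ho.isOrientation_fromEdgeSet
      _ ≤ n.choose R / 2 := by
          push_cast
          exact choose_sub_mul_le_half_choose hhR hfew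
  have hR2 : 2 ≤ R := by
    by_contra! hR1
    rw [G.cliqueFinset_eq_powersetCard_of_le_one (by omega), card_powersetCard, card_univ,
      Fintype.card_fin] at hcliques
    have hpos : (0 : ℝ) < n.choose R := by exact_mod_cast Nat.choose_pos hn
    linarith
  have hcount : (n.choose R : ℝ)
      ≤ #Gᶜ.edgeFinset * (n - 2).choose (R - 2) + #(G.cliqueFinset R) := by
    exact_mod_cast Fintype.card_fin n ▸
      G.choose_le_card_edgeFinset_compl_mul_add_card_cliqueFinset R
  rw [← SimpleGraph.edgeSet_compl_fromEdgeSet, ← SimpleGraph.coe_edgeFinset, Set.ncard_coe_finset]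
  exact sq_div_le_of_choose_le_mul_choose hR2 hn (by linarith)

/-- Saturation: if some orientation of `F ⊆ E(K_n)` has at most
`(2·C(R,h))⁻¹·C(n,h)` copies of `H⃗`, then at least `n²/(2R²)` edges of `K_n` are
missing from `F`, where `R = R⃗(H⃗)` and `n ≥ R`. -/
theorem stmt5 {β : Type*} [Fintype β] (H : β → β → Prop)
    (hor : ∀ a b, H a b → ¬ H b a) (hacyclic : RelAcyclic H)
    (h R : ℕ) (hh : h = Fintype.card β) (hR : R = orientationRamsey H)
    (n : ℕ) (hn : R ≤ n)
    (F : Set (Sym2 (Fin n))) (hF : F ⊆ (SimpleGraph.completeGraph (Fin n)).edgeSet)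
    (o : Fin n → Fin n → Prop) (ho : IsOrientationOfEdges n F o)
    (hfew : (copyCount H n o : ℝ) ≤ (n.choose h : ℝ) / (2 * (R.choose h : ℝ))) :
    (n : ℝ) ^ 2 / (2 * (R : ℝ) ^ 2) ≤ (((SimpleGraph.completeGraph (Fin n)).edgeSet \ F).ncard : ℝ) :=
  stmt5_general H h R hh hR n hn F o ho hfew
end

section
/- Let S⃗ be an oriented star and G a graph. Then G → S⃗ if and only if H → S⃗, where H is the (v(S⃗)−1)-core of G. -/
/-!
Let `d⁺` and `d⁻` be the out- and in-degree of the centre of `S⃗`, so `d⁺ + d⁻ = v(S⃗) - 1`.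
An oriented graph contains `S⃗` exactly when some vertex has out-degree at least `d⁺` and
in-degree at least `d⁻`. One direction is restriction to the subgraph. Conversely, take an
orientation of the core without `S⃗`, so every vertex is *deficient*: out-degree `< d⁺` or
in-degree `< d⁻`. By maximality of the core, the remaining vertices can be added back one at a
time, each with fewer than `d⁺ + d⁻` neighbours among those already present. Orient the edge from
the new vertex `u` to a neighbour `y` as `u → y` if `y` has out-degree `< d⁺`, and as `y → u`
otherwise: old vertices stay deficient, and `u` becomes deficient because its out- and in-degree
sum to less than `d⁺ + d⁻`. The resulting orientation of `G` has no copy of `S⃗`.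
-/

open Function

theorem Set.nonempty_embedding_of_ncard_le {α β : Type*} [Finite α] [Finite β] {s : Set α}
    {t : Set β} (h : s.ncard ≤ t.ncard) : Nonempty (s ↪ t) := by
  have := Fintype.ofFinite s
  have := Fintype.ofFinite t
  apply Function.Embedding.nonempty_of_card_le
  simpa [← Nat.card_eq_fintype_card, Nat.card_coe_set_eq] using h

section Degrees

variable {α β : Type*}

noncomputable def outDeg (o : α → α → Prop) (x : α) : ℕ := {y | o x y}.ncard

noncomputable def inDeg (o : α → α → Prop) (x : α) : ℕ := {y | o y x}.ncard

theorem outDeg_map_apply {f : α → β} (hf : Injective f) (o : α → α → Prop) (a : α) :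
    outDeg (Relation.Map o f f) (f a) = outDeg o a := by
  have : {y | Relation.Map o f f (f a) y} = f '' {b | o a b} := by
    ext y; simp [Relation.Map, hf.eq_iff]
  rw [outDeg, this, Set.ncard_image_of_injective _ hf, outDeg]

theorem inDeg_map_apply {f : α → β} (hf : Injective f) (o : α → α → Prop) (a : α) :
    inDeg (Relation.Map o f f) (f a) = inDeg o a := by
  have : {y | Relation.Map o f f y (f a)} = f '' {b | o b a} := by
    ext y; simp [Relation.Map, hf.eq_iff]
  rw [inDeg, this, Set.ncard_image_of_injective _ hf, inDeg]

end Degrees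

section Orientations

variable {α β γ : Type*}

theorem IsOrientation.asymm {G : SimpleGraph α} {o : α → α → Prop} (ho : IsOrientation G o)
    {u v : α} (h : o u v) : ¬ o v u :=
  (ho.2 u v (ho.1 u v h)).1 h

theorem IsOrientation.map {G : SimpleGraph α} {o : α → α → Prop} (ho : IsOrientation G o)
    (f : α ↪ β) : IsOrientation (G.map f) (Relation.Map o f f) := by
  refine ⟨?_, ?_⟩
  · rintro _ _ ⟨a, b, hab, rfl, rfl⟩
    exact (SimpleGraph.map_adj _ _ _ _).2 ⟨a, b, ho.1 a b hab, rfl, rfl⟩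
  · simp only [SimpleGraph.map_adj]
    rintro _ _ ⟨a, b, hab, rfl, rfl⟩
    simp only [Relation.map_apply_apply f.injective f.injective]
    exact ho.2 a b hab

theorem Arrows.of_subgraph {G : SimpleGraph α} (H : G.Subgraph) {S : γ → γ → Prop}
    (h : Arrows H.coe S) : Arrows G S := by
  intro o ho
  have hres : IsOrientation H.coe (fun a b => H.Adj a b ∧ o a b) :=
    ⟨fun a b hab => hab.1, fun a b hab =>
      ⟨fun h h' => ho.asymm h.2 h'.2, fun h => ⟨hab, (ho.2 a b (H.adj_sub hab)).2
        fun h' => h ⟨hab.symm, h'⟩⟩⟩⟩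
  obtain ⟨f, hf, hfS⟩ := h _ hres
  exact ⟨Subtype.val ∘ f, Subtype.val_injective.comp hf, fun a b hab => (hfS a b hab).2⟩

end Orientations

section Stars

variable {α γ : Type*}

theorem HasCopy.exists_le_outDeg_inDeg [Finite α] {o : α → α → Prop} {S : γ → γ → Prop}
    (h : HasCopy o S) (c : γ) : ∃ x, outDeg S c ≤ outDeg o x ∧ inDeg S c ≤ inDeg o x := by
  obtain ⟨f, hf, hfS⟩ := h
  refine ⟨f c, ?_, ?_⟩
  · rw [outDeg, ← Set.ncard_image_of_injective _ hf]
    exact Set.ncard_le_ncard (Set.image_subset_iff.2 fun a ha => hfS _ _ ha)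
  · rw [inDeg, ← Set.ncard_image_of_injective _ hf]
    exact Set.ncard_le_ncard (Set.image_subset_iff.2 fun a ha => hfS _ _ ha)

structure IsOrientedStar (S : γ → γ → Prop) (c : γ) : Prop where
  asymm : ∀ a b, S a b → ¬ S b a
  eq_centre_or_eq_centre : ∀ a b, S a b → a = c ∨ b = c
  adj_centre : ∀ a, a ≠ c → S c a ∨ S a c

namespace IsOrientedStar

variable {S : γ → γ → Prop} {c : γ}

theorem outDeg_add_inDeg [Finite γ] (hS : IsOrientedStar S c) :
    outDeg S c + inDeg S c = Nat.card γ - 1 := by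
  have hdisj : Disjoint {a | S c a} {a | S a c} :=
    Set.disjoint_left.2 fun a h₁ h₂ => hS.asymm _ _ h₁ h₂
  have hunion : {a | S c a} ∪ {a | S a c} = {c}ᶜ := by
    ext a
    refine ⟨?_, hS.adj_centre a⟩
    rintro (h | h) rfl <;> exact hS.asymm _ _ h h
  have hcompl := Set.ncard_add_ncard_compl {c}
  rw [outDeg, inDeg, ← Set.ncard_union_eq hdisj, hunion]
  rw [Set.ncard_singleton] at hcompl
  omega

theorem eq_centre_of_not_adj (hS : IsOrientedStar S c) {d : γ} (h : ¬ S c d) (h' : ¬ S d c) :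
    d = c := by
  by_contra hne
  exact (hS.adj_centre d hne).elim h h'

theorem hasCopy [Finite α] [Finite γ] (hS : IsOrientedStar S c) {o : α → α → Prop}
    (ho : ∀ u v, o u v → ¬ o v u) {x : α} (hout : outDeg S c ≤ outDeg o x)
    (hin : inDeg S c ≤ inDeg o x) : HasCopy o S := by
  classical
  obtain ⟨e₁⟩ := Set.nonempty_embedding_of_ncard_le hout
  obtain ⟨e₂⟩ := Set.nonempty_embedding_of_ncard_le hin
  let f : γ → α := fun a =>
    if h : S c a then e₁ ⟨a, h⟩ else if h' : S a c then e₂ ⟨a, h'⟩ else x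
  have hxx : ¬ o x x := fun h => ho _ _ h h
  have hf_out (a : γ) : o x (f a) ↔ S c a := by
    by_cases h : S c a
    · simp only [f, dif_pos h, h, iff_true]
      exact (e₁ ⟨a, h⟩).2
    by_cases h' : S a c
    · simpa [f, h, h'] using ho _ _ (e₂ ⟨a, h'⟩).2
    · simpa [f, h, h'] using hxx
  have hf_in (a : γ) : o (f a) x ↔ S a c := by
    by_cases h : S c a
    · simpa [f, h, hS.asymm _ _ h] using ho _ _ (e₁ ⟨a, h⟩).2
    by_cases h' : S a c
    · simp only [f, dif_neg h, h', iff_true]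
      exact (e₂ ⟨a, h'⟩).2
    · simpa [f, h, h'] using hxx
  have hfc : f c = x := by
    have hcc : ¬ S c c := fun h => hS.asymm _ _ h h
    simp [f, hcc]
  refine ⟨f, fun a b hab => ?_, fun a b hab => ?_⟩
  · by_cases ha : S c a
    · have hb : S c b := (hf_out b).1 (hab ▸ (hf_out a).2 ha)
      simp only [f, dif_pos ha, dif_pos hb] at hab
      exact congrArg Subtype.val (e₁.injective (Subtype.ext hab))
    by_cases ha' : S a c
    · have hb' : S b c := (hf_in b).1 (hab ▸ (hf_in a).2 ha')
      have hb : ¬ S c b := fun h => hS.asymm _ _ h hb'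
      simp only [f, dif_neg ha, dif_pos ha', dif_neg hb, dif_pos hb'] at hab
      exact congrArg Subtype.val (e₂.injective (Subtype.ext hab))
    have hb : ¬ S c b := fun h => ha ((hf_out a).1 (hab ▸ (hf_out b).2 h))
    have hb' : ¬ S b c := fun h => ha' ((hf_in a).1 (hab ▸ (hf_in b).2 h))
    rw [hS.eq_centre_of_not_adj ha ha', hS.eq_centre_of_not_adj hb hb']
  · rcases hS.eq_centre_or_eq_centre a b hab with rfl | rfl
    · rw [hfc]; exact (hf_out b).2 hab
    · rw [hfc]; exact (hf_in a).2 hab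

end IsOrientedStar

end Stars

namespace SimpleGraph.Subgraph

variable {V : Type*} {G : SimpleGraph V}

def MinDegreeAtLeast (H : G.Subgraph) (m : ℕ) : Prop :=
  ∀ v ∈ H.verts, m ≤ (H.neighborSet v).ncard

def IsCore (H : G.Subgraph) (m : ℕ) : Prop :=
  H.MinDegreeAtLeast m ∧ ∀ H' : G.Subgraph, H'.MinDegreeAtLeast m → H' ≤ H

variable [Finite V] {H : G.Subgraph} {m : ℕ}

theorem MinDegreeAtLeast.induce_top (hH : H.MinDegreeAtLeast m) {W : Set V}
    (hW : H.verts ⊆ W) (hdeg : ∀ u ∈ W \ H.verts, m ≤ (G.neighborSet u ∩ W).ncard) :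
    ((⊤ : G.Subgraph).induce W).MinDegreeAtLeast m := by
  intro v (hv : v ∈ W)
  have hnbr : ((⊤ : G.Subgraph).induce W).neighborSet v = G.neighborSet v ∩ W := by
    ext w; simp [hv, and_comm]
  rw [hnbr]
  by_cases hvH : v ∈ H.verts
  · exact (hH v hvH).trans <| Set.ncard_le_ncard fun w hw =>
      ⟨H.adj_sub hw, hW (H.edge_vert hw.symm)⟩
  · exact hdeg v ⟨hv, hvH⟩

theorem IsCore.adj_of_mem (hH : H.IsCore m) {u v : V} (hu : u ∈ H.verts) (hv : v ∈ H.verts)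
    (huv : G.Adj u v) : H.Adj u v :=
  (hH.2 _ (hH.1.induce_top subset_rfl fun _ h => (h.2 h.1).elim)).2 ⟨hu, hv, huv⟩

theorem IsCore.coe_eq_induce (hH : H.IsCore m) : H.coe = G.induce H.verts := by
  ext u v
  exact ⟨H.adj_sub, hH.adj_of_mem u.2 v.2⟩

theorem IsCore.exists_lt_ncard_neighborSet_inter (hH : H.IsCore m) {W : Set V}
    (hW : H.verts ⊂ W) : ∃ u ∈ W \ H.verts, (G.neighborSet u ∩ W).ncard < m := by
  by_contra! hdeg
  exact hW.not_subset (hH.2 _ (hH.1.induce_top hW.subset hdeg)).1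

end SimpleGraph.Subgraph

theorem SimpleGraph.spanningCoe_induce_adj {V : Type*} {G : SimpleGraph V} {W : Set V}
    {x y : V} : (G.induce W).spanningCoe.Adj x y ↔ G.Adj x y ∧ x ∈ W ∧ y ∈ W := by
  simp [SimpleGraph.map_adj]

section AttachVertex

variable {V : Type*}

def attachVertex (o : V → V → Prop) (u : V) (A B : Set V) : V → V → Prop :=
  fun x y => o x y ∨ (x = u ∧ y ∈ A) ∨ (y = u ∧ x ∈ B)

variable {o : V → V → Prop} {u : V} {A B : Set V}

theorem outDeg_attachVertex_self (hu : ∀ y, ¬ o u y) (huB : u ∉ B) :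
    outDeg (attachVertex o u A B) u = A.ncard := by
  simp only [outDeg]; congr 1; ext y; simp [attachVertex, hu, huB]

theorem inDeg_attachVertex_self (hu : ∀ y, ¬ o y u) (huA : u ∉ A) :
    inDeg (attachVertex o u A B) u = B.ncard := by
  simp only [inDeg]; congr 1; ext y; simp [attachVertex, hu, huA]

theorem outDeg_attachVertex_of_ne {x : V} (hxu : x ≠ u) (hxB : x ∉ B) :
    outDeg (attachVertex o u A B) x = outDeg o x := by
  simp only [outDeg]; congr 1; ext y; simp [attachVertex, hxu, hxB]

theorem inDeg_attachVertex_of_ne {x : V} (hxu : x ≠ u) (hxA : x ∉ A) :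
    inDeg (attachVertex o u A B) x = inDeg o x := by
  simp only [inDeg]; congr 1; ext y; simp [attachVertex, hxu, hxA]

theorem IsOrientation.attachVertex {G : SimpleGraph V} {W : Set V}
    (ho : IsOrientation (G.induce W).spanningCoe o) (hu : u ∉ W)
    (hA : A ⊆ G.neighborSet u ∩ W) :
    IsOrientation (G.induce (insert u W)).spanningCoe
      (_root_.attachVertex o u A ((G.neighborSet u ∩ W) \ A)) := by
  have harc : ∀ x y, o x y → G.Adj x y ∧ x ∈ W ∧ y ∈ W := fun x y h =>
    SimpleGraph.spanningCoe_induce_adj.1 (ho.1 x y h)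
  have hor : ∀ x y, G.Adj x y → x ∈ W → y ∈ W → (o x y ↔ ¬ o y x) := fun x y h hx hy =>
    ho.2 x y (SimpleGraph.spanningCoe_induce_adj.2 ⟨h, hx, hy⟩)
  have hA' : ∀ y ∈ A, G.Adj u y ∧ y ∈ W := fun y hy => hA hy
  clear ho hA
  simp only [IsOrientation, SimpleGraph.spanningCoe_induce_adj, _root_.attachVertex,
    Set.mem_insert_iff, Set.mem_sdiff, Set.mem_inter_iff, SimpleGraph.mem_neighborSet]
  grind [SimpleGraph.Adj.symm, SimpleGraph.Adj.ne]

end AttachVertex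

section CoreExtension

variable {V : Type*} [Finite V] {G : SimpleGraph V} {p q : ℕ}

theorem exists_isOrientation_induce_insert {W : Set V} {o : V → V → Prop}
    (ho : IsOrientation (G.induce W).spanningCoe o)
    (hdeg : ∀ x ∈ W, outDeg o x < p ∨ inDeg o x < q) {u : V} (hu : u ∉ W)
    (hN : (G.neighborSet u ∩ W).ncard < p + q) :
    ∃ o', IsOrientation (G.induce (insert u W)).spanningCoe o' ∧
      ∀ x ∈ insert u W, outDeg o' x < p ∨ inDeg o' x < q := by
  set N := G.neighborSet u ∩ W
  set A := {y ∈ N | outDeg o y < p}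
  refine ⟨attachVertex o u A (N \ A), ho.attachVertex hu (Set.sep_subset _ _), ?_⟩
  have hoW : ∀ x y, o x y → x ∈ W ∧ y ∈ W := fun x y h =>
    (SimpleGraph.spanningCoe_induce_adj.1 (ho.1 x y h)).2
  have huN : u ∉ N := fun h => hu h.2
  rintro x (rfl | hx)
  · rw [outDeg_attachVertex_self (fun y h => hu (hoW _ _ h).1) fun h => huN h.1,
      inDeg_attachVertex_self (fun y h => hu (hoW _ _ h).2) fun h => huN h.1]
    have := Set.ncard_sdiff_add_ncard_of_subset (show A ⊆ N from Set.sep_subset _ _)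
    omega
  have hxu : x ≠ u := fun h => hu (h ▸ hx)
  by_cases hx_out : outDeg o x < p
  · left
    rwa [outDeg_attachVertex_of_ne hxu fun h => h.2 ⟨h.1, hx_out⟩]
  · right
    rw [inDeg_attachVertex_of_ne hxu fun h => hx_out h.2]
    exact (hdeg x hx).resolve_left hx_out

theorem SimpleGraph.Subgraph.IsCore.exists_isOrientation_induce {H : G.Subgraph}
    (hH : H.IsCore (p + q)) {o₀ : V → V → Prop}
    (ho₀ : IsOrientation (G.induce H.verts).spanningCoe o₀)
    (hdeg₀ : ∀ x ∈ H.verts, outDeg o₀ x < p ∨ inDeg o₀ x < q) (W : Set V) (hW : H.verts ⊆ W) :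
    ∃ o, IsOrientation (G.induce W).spanningCoe o ∧ ∀ x ∈ W, outDeg o x < p ∨ inDeg o x < q := by
  induction W using WellFoundedLT.induction with
  | _ W ih =>
  rcases hW.eq_or_ssubset with rfl | hlt
  · exact ⟨o₀, ho₀, hdeg₀⟩
  obtain ⟨u, ⟨huW, huH⟩, hu⟩ := hH.exists_lt_ncard_neighborSet_inter hlt
  obtain ⟨o, ho, hdeg⟩ := ih (W \ {u}) (Set.sdiff_singleton_ssubset.2 huW)
    fun x hx => ⟨hW hx, fun h => huH (h ▸ hx)⟩
  have hN : (G.neighborSet u ∩ (W \ {u})).ncard < p + q :=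
    (Set.ncard_le_ncard (Set.inter_subset_inter_right _ Set.sdiff_subset)).trans_lt hu
  have := exists_isOrientation_induce_insert ho hdeg (fun h => h.2 rfl) hN
  rwa [Set.insert_sdiff_singleton, Set.insert_eq_of_mem huW] at this

theorem SimpleGraph.Subgraph.IsCore.exists_isOrientation {H : G.Subgraph}
    (hH : H.IsCore (p + q)) {o₀ : H.verts → H.verts → Prop} (ho₀ : IsOrientation H.coe o₀)
    (hdeg₀ : ∀ x, outDeg o₀ x < p ∨ inDeg o₀ x < q) :
    ∃ o, IsOrientation G o ∧ ∀ x, outDeg o x < p ∨ inDeg o x < q := by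
  have hbase := (hH.coe_eq_induce ▸ ho₀).map (Function.Embedding.subtype _)
  obtain ⟨o, ho, hdeg⟩ := hH.exists_isOrientation_induce hbase
    (fun x hx => by
      have h := hdeg₀ ⟨x, hx⟩
      rwa [← outDeg_map_apply Subtype.val_injective,
        ← inDeg_map_apply Subtype.val_injective] at h)
    Set.univ (Set.subset_univ _)
  rw [SimpleGraph.spanningCoe_induce_univ] at ho
  exact ⟨o, ho, fun x => hdeg x trivial⟩

end CoreExtension

/-- For an oriented star `S⃗` (with centre `c`) and a graph `G`, we have `G → S⃗`
if and only if `H → S⃗`, where `H` is the `(v(S⃗)-1)`-core of `G`. -/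
theorem stmt10 {V : Type*} [Fintype V] (G : SimpleGraph V)
    {γ : Type*} [Fintype γ] (S : γ → γ → Prop)
    (hor : ∀ a b, S a b → ¬ S b a) (c : γ)
    (hstar₁ : ∀ a b, S a b → a = c ∨ b = c)
    (hstar₂ : ∀ a, a ≠ c → S c a ∨ S a c)
    (H : G.Subgraph)
    (hcore : ∀ v ∈ H.verts, Fintype.card γ - 1 ≤ (H.neighborSet v).ncard)
    (hmax : ∀ H' : G.Subgraph,
      (∀ v ∈ H'.verts, Fintype.card γ - 1 ≤ (H'.neighborSet v).ncard) → H' ≤ H) :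
    Arrows G S ↔ Arrows H.coe S := by
  have hS : IsOrientedStar S c := ⟨hor, hstar₁, hstar₂⟩
  have hH : H.IsCore (outDeg S c + inDeg S c) := by
    rw [hS.outDeg_add_inDeg, Nat.card_eq_fintype_card]
    exact ⟨hcore, hmax⟩
  refine ⟨fun hG o₀ ho₀ => ?_, Arrows.of_subgraph H⟩
  by_contra hno
  have hdeficient (x : H.verts) : outDeg o₀ x < outDeg S c ∨ inDeg o₀ x < inDeg S c := by
    by_contra! h
    exact hno (hS.hasCopy (fun _ _ => ho₀.asymm) h.1 h.2)
  obtain ⟨o, ho, hdeg⟩ := hH.exists_isOrientation ho₀ hdeficient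
  obtain ⟨x, hx_out, hx_in⟩ := (hG o ho).exists_le_outDeg_inDeg c
  have := hdeg x
  omega
end

section
/- Let F⃗ be an oriented graph (with at least one vertex) whose maximum 2-density satisfies m₂(F⃗) ≤ 2, and let TT⃗₃′ be the transitive tournament on 3 vertices with an arbitrary choice of root. Then the rooted product satisfies m₂(F⃗∘TT⃗₃′) = 2. -/
/-- The 2-density associated to a (sub)graph with `v` vertices and `e` edges:
`(e-1)/(v-2)` if `v ≥ 3`, `1/2` for a single edge, and `0` otherwise. -/
noncomputable def d2 (v e : ℕ) : ℝ :=
  if 3 ≤ v then (e - 1 : ℝ) / (v - 2 : ℝ) else if e = 1 then 1 / 2 else 0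

/-- The maximum 2-density `m₂(H)` of a finite simple graph `H`. -/
noncomputable def m2 {α : Type*} [Fintype α] (H : SimpleGraph α) : ℝ :=
  sSup {x : ℝ | ∃ J : H.Subgraph, x = d2 J.verts.ncard J.edgeSet.ncard}

/-- The maximum 2-density of an oriented graph: that of its underlying graph. -/
noncomputable def m2Rel {β : Type*} [Fintype β] (H : β → β → Prop) : ℝ :=
  m2 (SimpleGraph.fromRel H)
/-- The rooted product `F⃗ ∘ H⃗` of an oriented graph `F` with an oriented graph `H`
rooted at `r`. -/
def rootedProd {β γ : Type*} (F : β → β → Prop) (H : γ → γ → Prop) (r : γ) :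
    β × γ → β × γ → Prop :=
  fun x y => (x.2 = r ∧ y.2 = r ∧ F x.1 y.1) ∨ (x.1 = y.1 ∧ H x.2 y.2)

/-- The transitive tournament on 3 vertices. -/
def TT3 : Fin 3 → Fin 3 → Prop := fun a b => a < b

/-!
A copy of `TT⃗₃` is a triangle, which has 2-density `2`. Conversely, for a subgraph `J` of
`F⃗∘TT⃗₃′` with `v ≥ 3` vertices, `d₂(J) ≤ 2` means `e(J) + 3 ≤ 2v`. The edges of `J` lie either
in one copy of `TT⃗₃` or between roots, where they form a subgraph `K` of `F` on the `k` roots of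
`J`. A copy with `v_b ≤ 3` vertices, `ρ_b ≤ 1` of them roots, has at most `min(v_b, 2v_b - 2ρ_b)`
edges. If `k ≤ 1` then `K` has no edges and `e(J) ≤ v`; if `k ≥ 2` then `e(K) ≤ 2k - 3`
(from `m₂(F⃗) ≤ 2` when `k ≥ 3`), so `e(J) ≤ (2v - 2k) + (2k - 3)`.
-/

open SimpleGraph

lemma d2_le_two_iff {v e : ℕ} (hv : 3 ≤ v) : d2 v e ≤ 2 ↔ e + 3 ≤ 2 * v := by
  have hv' : (3 : ℝ) ≤ v := by exact_mod_cast hv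
  rw [d2, if_pos hv, div_le_iff₀ (by linarith), ← Nat.cast_le (α := ℝ)]
  push_cast
  constructor <;> intro h <;> linarith

lemma d2_le_two_of_lt_three {v e : ℕ} (hv : v < 3) : d2 v e ≤ 2 := by
  rw [d2, if_neg (by omega)]
  split_ifs <;> norm_num

lemma le_and_add_two_mul_le_of_le_choose_two {e v k : ℕ} (he : e ≤ v.choose 2) (hv : v ≤ 3)
    (hk : k ≤ 1) (hkv : k ≤ v) : e ≤ v ∧ e + 2 * k ≤ 2 * v := by
  interval_cases v <;> simp [Nat.choose] at he <;> omega

lemma Set.ncard_iUnion_le_sum {ι α : Type*} [Fintype ι] (s : ι → Set α) :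
    (⋃ i, s i).ncard ≤ ∑ i, (s i).ncard := by
  simpa using Finset.univ.set_ncard_biUnion_le s

lemma Set.ncard_eq_sum_ncard_preimage_prodMk {β γ : Type*} [Fintype β] [Finite γ]
    (s : Set (β × γ)) : s.ncard = ∑ b, (Prod.mk b ⁻¹' s).ncard := by
  classical
  have := Fintype.ofFinite γ
  rw [Set.ncard_eq_toFinset_card', Finset.card_eq_sum_card_fiberwise
    (f := Prod.fst) (fun _ _ => Finset.mem_univ _)]
  refine Finset.sum_congr rfl fun b _ => ?_
  symm
  rw [Set.ncard_eq_toFinset_card', ← Finset.card_image_of_injective _ (Prod.mk_right_injective b)]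
  congr 1
  ext ⟨a, c⟩
  simp only [Finset.mem_image, Set.mem_toFinset, Set.mem_preimage, Prod.mk.injEq,
    Finset.mem_filter]
  grind

lemma SimpleGraph.Subgraph.ncard_edgeSet_le_choose_two {V : Type*} [Finite V] {G : SimpleGraph V}
    (J : G.Subgraph) : J.edgeSet.ncard ≤ J.verts.ncard.choose 2 := by
  classical
  have := Fintype.ofFinite J.verts
  rw [← J.image_coe_edgeSet_coe, Set.ncard_image_of_injective _ (Sym2.map.injective
    Subtype.coe_injective), ← coe_edgeFinset, Set.ncard_coe_finset, ← Nat.card_coe_set_eq,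
    Nat.card_eq_fintype_card]
  exact card_edgeFinset_le_card_choose_two

lemma SimpleGraph.Subgraph.mk_mem_image_comap_edgeSet {V W : Type*} {A : SimpleGraph W}
    {G : SimpleGraph V} (f : A ↪g G) (J : G.Subgraph) {u v : W} (h : J.Adj (f u) (f v)) :
    s(f u, f v) ∈ Sym2.map f '' (J.comap f.toHom).edgeSet :=
  ⟨s(u, v), ⟨f.map_rel_iff.1 (J.adj_sub h), h⟩, rfl⟩

section TwoDensity

variable {V W : Type*} [Fintype V] [Fintype W] {G : SimpleGraph V}

lemma bddAbove_d2_subgraph (G : SimpleGraph V) :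
    BddAbove {x : ℝ | ∃ J : G.Subgraph, x = d2 J.verts.ncard J.edgeSet.ncard} :=
  ((Set.finite_range fun J : G.Subgraph => d2 J.verts.ncard J.edgeSet.ncard).subset
    (by rintro _ ⟨J, rfl⟩; exact ⟨J, rfl⟩)).bddAbove

lemma d2_le_m2 (J : G.Subgraph) : d2 J.verts.ncard J.edgeSet.ncard ≤ m2 G :=
  le_csSup (bddAbove_d2_subgraph G) ⟨J, rfl⟩

lemma m2_le_two_iff :
    m2 G ≤ 2 ↔
      ∀ J : G.Subgraph, 3 ≤ J.verts.ncard → J.edgeSet.ncard + 3 ≤ 2 * J.verts.ncard := by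
  refine ⟨fun h J hJ => (d2_le_two_iff hJ).1 ((d2_le_m2 J).trans h), fun h => ?_⟩
  refine csSup_le ⟨_, ⊥, rfl⟩ ?_
  rintro _ ⟨J, rfl⟩
  rcases lt_or_ge J.verts.ncard 3 with hJ | hJ
  · exact d2_le_two_of_lt_three hJ
  · exact (d2_le_two_iff hJ).2 (h J hJ)

lemma m2_le_m2_of_copy {A : SimpleGraph W} (f : A.Copy G) : m2 A ≤ m2 G := by
  refine csSup_le ⟨_, ⊥, rfl⟩ ?_
  rintro _ ⟨J, rfl⟩
  have hverts : (J.map f.toHom).verts.ncard = J.verts.ncard :=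
    Set.ncard_image_of_injective _ f.injective
  have hedges : (J.map f.toHom).edgeSet.ncard = J.edgeSet.ncard := by
    rw [Subgraph.edgeSet_map, Set.ncard_image_of_injective _ (Sym2.map.injective f.injective)]
  rw [← hverts, ← hedges]
  exact d2_le_m2 _

end TwoDensity

lemma two_le_m2_top_fin_three : 2 ≤ m2 (⊤ : SimpleGraph (Fin 3)) := by
  classical
  have hedges : (⊤ : (⊤ : SimpleGraph (Fin 3)).Subgraph).edgeSet.ncard = 3 := by
    rw [Subgraph.edgeSet_top, ← coe_edgeFinset, Set.ncard_coe_finset,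
      card_edgeFinset_top_eq_card_choose_two]
    rfl
  have hverts : (⊤ : (⊤ : SimpleGraph (Fin 3)).Subgraph).verts.ncard = 3 := by
    simp [Set.ncard_univ]
  have := d2_le_m2 (⊤ : (⊤ : SimpleGraph (Fin 3)).Subgraph)
  rw [hedges, hverts] at this
  norm_num [d2] at this
  linarith

lemma fromRel_TT3 : fromRel TT3 = ⊤ := by
  ext a b
  simp [TT3]

section RootedProduct

variable {β γ : Type*} (F : β → β → Prop) (H : γ → γ → Prop) (r : γ)

def rootedProdFiberEmbedding (b : β) : fromRel H ↪g fromRel (rootedProd F H r) where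
  toFun c := (b, c)
  inj' := Prod.mk_right_injective b
  map_rel_iff' := by
    intro c d
    simp only [Function.Embedding.coeFn_mk, fromRel_adj, rootedProd, ne_eq, Prod.mk.injEq]
    grind

def rootedProdRootEmbedding : fromRel F ↪g fromRel (rootedProd F H r) where
  toFun a := (a, r)
  inj' := Prod.mk_left_injective r
  map_rel_iff' := by
    intro a b
    simp only [Function.Embedding.coeFn_mk, fromRel_adj, rootedProd, ne_eq, Prod.mk.injEq]
    grind

variable {F H r}

lemma rootedProd_edgeSet_subset (J : (fromRel (rootedProd F H r)).Subgraph) :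
    J.edgeSet ⊆ (⋃ b, Sym2.map (rootedProdFiberEmbedding F H r b) ''
        (J.comap (rootedProdFiberEmbedding F H r b).toHom).edgeSet) ∪
      Sym2.map (rootedProdRootEmbedding F H r) ''
        (J.comap (rootedProdRootEmbedding F H r).toHom).edgeSet := by
  intro e he
  induction e using Sym2.ind with
  | h x y =>
    wlog hxy : rootedProd F H r x y generalizing x y
    · obtain ⟨-, h | h⟩ := (fromRel_adj _ x y).1 (J.adj_sub he)
      · exact absurd h hxy
      · exact Sym2.eq_swap ▸ this y x he.symm h
    obtain ⟨a, c⟩ := x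
    obtain ⟨a', d⟩ := y
    rcases hxy with ⟨rfl, rfl, -⟩ | ⟨rfl, -⟩
    · exact Or.inr (J.mk_mem_image_comap_edgeSet (rootedProdRootEmbedding F H _) he)
    · exact Or.inl (Set.mem_iUnion_of_mem a
        (J.mk_mem_image_comap_edgeSet (rootedProdFiberEmbedding F H r a) he))

variable [Fintype β] [Fintype γ]

lemma ncard_edgeSet_le_sum_fiber_add_root (J : (fromRel (rootedProd F H r)).Subgraph) :
    J.edgeSet.ncard ≤ ∑ b, (J.comap (rootedProdFiberEmbedding F H r b).toHom).edgeSet.ncard +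
      (J.comap (rootedProdRootEmbedding F H r).toHom).edgeSet.ncard :=
  calc J.edgeSet.ncard
      ≤ ((⋃ b, Sym2.map (rootedProdFiberEmbedding F H r b) ''
          (J.comap (rootedProdFiberEmbedding F H r b).toHom).edgeSet) ∪
        Sym2.map (rootedProdRootEmbedding F H r) ''
          (J.comap (rootedProdRootEmbedding F H r).toHom).edgeSet).ncard :=
        Set.ncard_le_ncard (rootedProd_edgeSet_subset J) (Set.toFinite _)
    _ ≤ _ := (Set.ncard_union_le _ _).trans (add_le_add
        ((Set.ncard_iUnion_le_sum _).trans
          (Finset.sum_le_sum fun _ _ => Set.ncard_image_le (Set.toFinite _)))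
        (Set.ncard_image_le (Set.toFinite _)))

theorem ncard_edgeSet_add_three_le_of_rootedProd (hγ : Fintype.card γ ≤ 3)
    (hF : ∀ K : (fromRel F).Subgraph,
      3 ≤ K.verts.ncard → K.edgeSet.ncard + 3 ≤ 2 * K.verts.ncard)
    (J : (fromRel (rootedProd F H r)).Subgraph) (hJ : 3 ≤ J.verts.ncard) :
    J.edgeSet.ncard + 3 ≤ 2 * J.verts.ncard := by
  classical
  set K := J.comap (rootedProdRootEmbedding F H r).toHom
  set Jb := fun b => J.comap (rootedProdFiberEmbedding F H r b).toHom
  set root : β → ℕ := fun b => if (b, r) ∈ J.verts then 1 else 0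
  have hverts : J.verts.ncard = ∑ b, (Jb b).verts.ncard :=
    Set.ncard_eq_sum_ncard_preimage_prodMk _
  have hroots : K.verts.ncard = ∑ b, root b := by
    simp only [root, Finset.sum_boole, Nat.cast_id, Set.ncard_eq_toFinset_card']
    congr 1
    ext b
    simp only [Set.mem_toFinset, Finset.mem_filter, Finset.mem_univ, true_and]
    rfl
  have hroot (b : β) : root b ≤ 1 ∧ root b ≤ (Jb b).verts.ncard := by
    by_cases hb : (b, r) ∈ J.verts
    · simp only [root, hb, if_true, le_refl, true_and]
      exact (Set.ncard_pos (Set.toFinite _)).2 ⟨r, hb⟩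
    · simp [root, hb]
  have hfiber (b : β) : (Jb b).edgeSet.ncard ≤ (Jb b).verts.ncard ∧
      (Jb b).edgeSet.ncard + 2 * root b ≤ 2 * (Jb b).verts.ncard :=
    le_and_add_two_mul_le_of_le_choose_two (Jb b).ncard_edgeSet_le_choose_two
      ((Set.ncard_le_card _).trans (Nat.card_eq_fintype_card (α := γ) ▸ hγ))
      (hroot b).1 (hroot b).2
  have hlocal : ∑ b, (Jb b).edgeSet.ncard ≤ J.verts.ncard :=
    hverts ▸ Finset.sum_le_sum fun b _ => (hfiber b).1
  have hlocal' : ∑ b, (Jb b).edgeSet.ncard + 2 * K.verts.ncard ≤ 2 * J.verts.ncard := by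
    rw [hverts, hroots, Finset.mul_sum, Finset.mul_sum, ← Finset.sum_add_distrib]
    exact Finset.sum_le_sum fun b _ => (hfiber b).2
  have hedges : J.edgeSet.ncard ≤ ∑ b, (Jb b).edgeSet.ncard + K.edgeSet.ncard :=
    ncard_edgeSet_le_sum_fiber_add_root J
  have hK := Nat.choose_two_right _ ▸ K.ncard_edgeSet_le_choose_two
  rcases lt_or_ge K.verts.ncard 3 with hk | hk
  · interval_cases K.verts.ncard <;> omega
  · have := hF K hk
    omega

end RootedProduct

theorem m2Rel_rootedProd_le_two {β γ : Type*} [Fintype β] [Fintype γ] (F : β → β → Prop)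
    (H : γ → γ → Prop) (r : γ) (hγ : Fintype.card γ ≤ 3) (hF : m2Rel F ≤ 2) :
    m2Rel (rootedProd F H r) ≤ 2 :=
  m2_le_two_iff.2 (ncard_edgeSet_add_three_le_of_rootedProd hγ (m2_le_two_iff.1 hF))

theorem stmt14_general {β : Type*} [Fintype β] [Nonempty β] (F : β → β → Prop)
    (hm : m2Rel F ≤ 2) (r : Fin 3) :
    m2Rel (rootedProd F TT3 r) = 2 := by
  obtain ⟨b⟩ := ‹Nonempty β›
  refine le_antisymm (m2Rel_rootedProd_le_two F TT3 r (by simp) hm) ?_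
  calc (2 : ℝ) ≤ m2 (fromRel TT3) := fromRel_TT3 ▸ two_le_m2_top_fin_three
    _ ≤ m2Rel (rootedProd F TT3 r) :=
      m2_le_m2_of_copy (rootedProdFiberEmbedding F TT3 r b).toCopy

/-- If `F⃗` is a (nonempty) oriented graph with `m₂(F⃗) ≤ 2`, then
`m₂(F⃗∘TT⃗₃′) = 2` for any choice of root of `TT⃗₃`. -/
theorem stmt14 {β : Type*} [Fintype β] [Nonempty β] (F : β → β → Prop)
    (hor : ∀ a b, F a b → ¬ F b a) (hm : m2Rel F ≤ 2) (r : Fin 3) :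
    m2Rel (rootedProd F TT3 r) = 2 :=
  stmt14_general F hm r
end
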